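/- If Ω ⊆ Ω′ are sets, then the Hechler poset H_Ω is a suborder of H_{Ω′} and every maximal antichain of H_Ω is a maximal antichain of H_{Ω′}; that is, H_Ω is a complete subposet of H_{Ω′}. -/
import Mathlib


/-- A condition of Hechler's poset `H_Ω`. -/
structure HCond (Ω : Type*) where
  F : Finset Ω
  n : ℕ
  f : Ω → ℕ → Bool
  norm : ∀ z i, f z i = true → z ∈ F ∧ i < n

def HLe {Ω : Type*} (q p : HCond Ω) : Prop :=
  p.F ⊆ q.F ∧ p.n ≤ q.n ∧
    (∀ z ∈ p.F, ∀ i < p.n, q.f z i = p.f z i) ∧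
    ∀ i, p.n ≤ i → i < q.n →
      ∀ z ∈ p.F, ∀ w ∈ p.F, q.f z i = true → q.f w i = true → z = w

def HCompat {Ω : Type*} (p q : HCond Ω) : Prop := ∃ r, HLe r p ∧ HLe r q

/-- `p` is a condition of `H_S` for `S ⊆ Ω'`. -/
def HIn {Ω' : Type*} (S : Set Ω') (p : HCond Ω') : Prop := (↑p.F : Set Ω') ⊆ S

section Aux

variable {Ω' : Type*} (S : Set Ω') [DecidablePred (· ∈ S)]

/-- Restriction of a condition to `S`. -/
def HRes (p : HCond Ω') : HCond Ω' where
  F := p.F.filter (· ∈ S)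
  n := p.n
  f z i := p.f z i && decide (z ∈ S)
  norm := by
    intro z i h
    simp only [Bool.and_eq_true, decide_eq_true_eq] at h
    exact ⟨Finset.mem_filter.2 ⟨(p.norm z i h.1).1, h.2⟩, (p.norm z i h.1).2⟩

theorem HRes_in (p : HCond Ω') : HIn S (HRes S p) := by
  intro z hz
  simp only [HRes, Finset.coe_filter, Set.mem_setOf_eq] at hz
  exact hz.2

theorem hle_trans {Ω : Type*} {r q p : HCond Ω} (h1 : HLe r q) (h2 : HLe q p) : HLe r p := by
  obtain ⟨hF1, hn1, hv1, ha1⟩ := h1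
  obtain ⟨hF2, hn2, hv2, ha2⟩ := h2
  refine ⟨hF2.trans hF1, hn2.trans hn1, ?_, ?_⟩
  · intro z hz i hi
    rw [hv1 z (hF2 hz) i (lt_of_lt_of_le hi hn2), hv2 z hz i hi]
  · intro i hi1 hi2 z hz w hw hz' hw'
    by_cases h : i < q.n
    · have hz'' : q.f z i = true := by rw [← hv1 z (hF2 hz) i h]; exact hz'
      have hw'' : q.f w i = true := by rw [← hv1 w (hF2 hw) i h]; exact hw'
      exact ha2 i hi1 h z hz w hw hz'' hw''
    · exact ha1 i (le_of_not_gt h) hi2 z (hF2 hz) w (hF2 hw) hz' hw'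

/-- `HRes` is monotone: if `w ≤ p` then `w↾S ≤ p↾S`, and if moreover `p ∈ H_S`
then `w↾S ≤ p`. -/
theorem hres_le_of_le_hin {w p : HCond Ω'} (hp : HIn S p) (h : HLe w p) :
    HLe (HRes S w) p := by
  obtain ⟨hF, hn, hv, ha⟩ := h
  refine ⟨?_, hn, ?_, ?_⟩
  · intro z hz
    exact Finset.mem_filter.2 ⟨hF hz, hp hz⟩
  · intro z hz i hi
    simp only [HRes, hv z hz i hi, Bool.and_eq_true, decide_eq_true_eq]
    simp [hp hz, hv z hz i hi]
  · intro i hi1 hi2 z hz y hy hz' hy'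
    simp only [HRes, Bool.and_eq_true, decide_eq_true_eq] at hz' hy'
    exact ha i hi1 hi2 z hz y hy hz'.1 hy'.1

/-- The amalgam of `w' ≤ p↾S` (with `w' ⊆ S`) and `p`. -/
theorem hamalg {w p : HCond Ω'} [DecidableEq Ω'] (hw : HIn S w)
    (h : HLe w (HRes S p)) : HCompat p w := by
  obtain ⟨hF, hn, hv, ha⟩ := h
  have hnorm : ∀ z i, (if z ∈ S then w.f z i else p.f z i) = true →
      z ∈ w.F ∪ p.F ∧ i < w.n := by
    intro z i hzi
    by_cases hzS : z ∈ S
    · rw [if_pos hzS] at hzi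
      exact ⟨Finset.mem_union_left _ (w.norm z i hzi).1, (w.norm z i hzi).2⟩
    · rw [if_neg hzS] at hzi
      exact ⟨Finset.mem_union_right _ (p.norm z i hzi).1,
        lt_of_lt_of_le (p.norm z i hzi).2 hn⟩
  refine ⟨⟨w.F ∪ p.F, w.n, fun z i => if z ∈ S then w.f z i else p.f z i, hnorm⟩,
    ⟨Finset.subset_union_right, hn, ?_, ?_⟩,
    ⟨Finset.subset_union_left, le_refl _, ?_, ?_⟩⟩
  · -- values agree with p
    intro z hz i hi
    by_cases hzS : z ∈ S
    · simp only [if_pos hzS]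
      have := hv z (Finset.mem_filter.2 ⟨hz, hzS⟩) i hi
      simp only [HRes, Bool.and_eq_true, decide_eq_true_eq] at this
      rw [this]
      simp [hzS]
    · simp [if_neg hzS]
  · -- antichain condition over p
    intro i hi1 hi2 z hz y hy hz' hy'
    dsimp only at hz' hy'
    have hzS : z ∈ S := by
      by_contra hzS
      rw [if_neg hzS] at hz'
      exact absurd (p.norm z i hz').2 (not_lt.2 hi1)
    have hyS : y ∈ S := by
      by_contra hyS
      rw [if_neg hyS] at hy'
      exact absurd (p.norm y i hy').2 (not_lt.2 hi1)
    rw [if_pos hzS] at hz'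
    rw [if_pos hyS] at hy'
    exact ha i hi1 hi2 z (Finset.mem_filter.2 ⟨hz, hzS⟩) y
      (Finset.mem_filter.2 ⟨hy, hyS⟩) hz' hy'
  · -- values agree with w
    intro z hz i _
    dsimp only
    rw [if_pos (hw hz)]
  · -- antichain condition over w (vacuous since same n)
    intro i hi1 hi2
    exact absurd hi2 (not_lt.2 hi1)

end Aux

/-- `H_Ω ⋖ H_{Ω'}`: every maximal antichain of `H_S` is maximal in `H_{Ω'}`. -/
theorem hechler_complete_subposet {Ω' : Type*} (S : Set Ω') (A : Set (HCond Ω'))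
    (hA : ∀ p ∈ A, HIn S p)
    (hanti : ∀ p ∈ A, ∀ q ∈ A, p ≠ q → ¬ HCompat p q)
    (hmax : ∀ p : HCond Ω', HIn S p → ∃ q ∈ A, HCompat p q) :
    ∀ p : HCond Ω', ∃ q ∈ A, HCompat p q := by
  classical
  intro p
  obtain ⟨q, hqA, w, hwr, hwq⟩ := hmax (HRes S p) (HRes_in S p)
  refine ⟨q, hqA, ?_⟩
  -- restrict w to S
  have hw'r : HLe (HRes S w) (HRes S p) := hres_le_of_le_hin S (HRes_in S p) hwr
  have hw'q : HLe (HRes S w) q := hres_le_of_le_hin S (hA q hqA) hwq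
  obtain ⟨m, hmp, hmw'⟩ := hamalg S (HRes_in S w) hw'r
  exact ⟨m, hmp, hle_trans hmw' hw'q⟩
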